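/- arXiv:1902.02398 — 2 statements merged into one kernel-verified Lean document; each statement's English description precedes it below -/
import Mathlib

section
/- Let p be a real polynomial of degree d, let k ≥ 1, and suppose |p(j)| ≤ 1 for all integers j ∈ {0,1,...,k}. If d < sqrt(0.001 k / 2.002), then |p(x)| < 1.001 for all real x ∈ [0,k]. -/
open Polynomial Set

/-! Let `M` be the maximum of `|p|` on `[0, k]`. Markov's inequality at an endpoint, applied on
both `[0, x]` and `[x, k]`, gives `|p'| ≤ 4 d² M / k` on `[0, k]`. Every point of `[0, k]` lies
within `1/2` of an integer, so `M ≤ 1 + 2 d² M / k`, and `2 d² / k < 1 / 1001` forces `M < 1.001`. -/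

theorem Polynomial.derivative_eval_one_le_sq {n : ℕ} {P : ℝ[X]} (hdeg : P.natDegree ≤ n)
    (hb : ∀ x ∈ Icc (-1 : ℝ) 1, |P.eval x| ≤ 1) : (derivative P).eval 1 ≤ n ^ 2 := by
  have h := Chebyshev.eval_iterate_derivative_le_of_forall_abs_le_one (k := 1) le_rfl
    (degree_le_of_natDegree_le hdeg) hb
  simpa [Chebyshev.derivative_T_eval_one] using h

theorem Polynomial.abs_derivative_eval_one_le {n : ℕ} {P : ℝ[X]} {M : ℝ} (hdeg : P.natDegree ≤ n)
    (hb : ∀ x ∈ Icc (-1 : ℝ) 1, |P.eval x| ≤ M) : |(derivative P).eval 1| ≤ n ^ 2 * M := by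
  rcases (le_trans (abs_nonneg _) (hb 1 (by norm_num))).eq_or_lt with rfl | hM
  · have : P = 0 := eq_zero_of_infinite_isRoot P <| (Icc_infinite (by norm_num : (-1 : ℝ) < 1)).mono
      fun x hx => abs_nonpos_iff.mp (hb x hx)
    simp [this]
  have key : ∀ Q : ℝ[X], Q.natDegree ≤ n → (∀ x ∈ Icc (-1 : ℝ) 1, |Q.eval x| ≤ M) →
      (derivative Q).eval 1 ≤ n ^ 2 * M := by
    intro Q hQ hQb
    have := derivative_eval_one_le_sq (P := C M⁻¹ * Q) ((natDegree_C_mul_le _ _).trans hQ)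
      fun x hx => by
        rw [eval_mul, eval_C, abs_mul, abs_inv, abs_of_pos hM, inv_mul_le_one₀ hM]
        exact hQb x hx
    rwa [derivative_C_mul, eval_mul, eval_C, inv_mul_le_iff₀ hM, mul_comm] at this
  refine abs_le.mpr ⟨?_, key P hdeg hb⟩
  have := key (-P) (by rwa [natDegree_neg]) (by simpa using hb)
  simp only [derivative_neg, eval_neg] at this
  linarith

theorem Polynomial.abs_mul_abs_derivative_eval_add_le {n : ℕ} {P : ℝ[X]} {M : ℝ} (a b : ℝ)
    (hdeg : P.natDegree ≤ n) (hb : ∀ y ∈ Icc (-1 : ℝ) 1, |P.eval (a * y + b)| ≤ M) :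
    |a| * |(derivative P).eval (a + b)| ≤ n ^ 2 * M := by
  have hdeg' : (P.comp (C a * X + C b)).natDegree ≤ n := by
    calc _ ≤ P.natDegree * (C a * X + C b).natDegree := natDegree_comp_le
      _ ≤ n * 1 := Nat.mul_le_mul hdeg natDegree_linear_le
      _ = n := mul_one n
  have := abs_derivative_eval_one_le hdeg' fun y hy => by simpa using hb y hy
  simpa only [derivative_comp, derivative_add, derivative_C_mul_X, derivative_C, add_zero, eval_mul,
    eval_C, eval_comp, eval_add, eval_X, mul_one, abs_mul] using this

theorem Polynomial.abs_derivative_eval_mul_le {n : ℕ} {P : ℝ[X]} {M s t x : ℝ}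
    (hdeg : P.natDegree ≤ n) (hb : ∀ y ∈ Icc s t, |P.eval y| ≤ M) (hx : x ∈ Icc s t) :
    |(derivative P).eval x| * (t - s) ≤ 4 * n ^ 2 * M := by
  obtain ⟨hsx, hxt⟩ := hx
  -- `x` is the right endpoint of `[s, x]` and the left endpoint of `[x, t]`.
  have left := abs_mul_abs_derivative_eval_add_le ((x - s) / 2) ((x + s) / 2) hdeg fun y hy =>
    hb _ ⟨by nlinarith [hy.1, hy.2], by nlinarith [hy.1, hy.2]⟩
  have right := abs_mul_abs_derivative_eval_add_le ((x - t) / 2) ((x + t) / 2) hdeg fun y hy =>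
    hb _ ⟨by nlinarith [hy.1, hy.2], by nlinarith [hy.1, hy.2]⟩
  rw [show (x - s) / 2 + (x + s) / 2 = x by ring, abs_of_nonneg (by linarith)] at left
  rw [show (x - t) / 2 + (x + t) / 2 = x by ring, abs_of_nonpos (by linarith)] at right
  linarith

theorem exists_nat_le_abs_sub_le_half {k : ℕ} {x : ℝ} (hx : x ∈ Icc (0 : ℝ) k) :
    ∃ j : ℕ, j ≤ k ∧ |x - j| ≤ 1 / 2 := by
  obtain ⟨hlo, hhi⟩ := abs_le.mp (abs_sub_round x)
  have h0 : 0 ≤ round x := by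
    have : (-1 : ℝ) < round x := by linarith [hx.1]
    exact_mod_cast this
  have hk : round x ≤ k := by
    have : (round x : ℝ) < k + 1 := by linarith [hx.2]
    exact Int.lt_add_one_iff.mp (by exact_mod_cast this)
  refine ⟨(round x).toNat, by omega, ?_⟩
  rw [← Int.cast_natCast, Int.toNat_of_nonneg h0]
  exact abs_sub_round x

theorem Polynomial.abs_eval_le_of_abs_eval_nat_le {n k : ℕ} {P : ℝ[X]} {M x : ℝ} (hk : 0 < k)
    (hdeg : P.natDegree ≤ n) (hM : ∀ y ∈ Icc (0 : ℝ) k, |P.eval y| ≤ M)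
    (hgrid : ∀ j : ℕ, j ≤ k → |P.eval (j : ℝ)| ≤ 1) (hx : x ∈ Icc (0 : ℝ) k) :
    |P.eval x| ≤ 1 + 2 * n ^ 2 * M / k := by
  have hk' : (0 : ℝ) < k := by exact_mod_cast hk
  obtain ⟨j, hjk, hxj⟩ := exists_nat_le_abs_sub_le_half hx
  have hj : (j : ℝ) ∈ Icc (0 : ℝ) k := ⟨j.cast_nonneg, by exact_mod_cast hjk⟩
  have hderiv : ∀ y ∈ Icc (0 : ℝ) k, ‖deriv (fun y => P.eval y) y‖ ≤ 4 * n ^ 2 * M / k :=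
    fun y hy => by
      rw [Polynomial.deriv, Real.norm_eq_abs, le_div_iff₀ hk']
      simpa using abs_derivative_eval_mul_le hdeg hM hy
  have hmvt := (convex_Icc (0 : ℝ) k).norm_image_sub_le_of_norm_deriv_le
    (fun y _ => P.differentiableAt) hderiv hj hx
  simp only [Real.norm_eq_abs] at hmvt
  have hM0 : 0 ≤ M := (abs_nonneg _).trans (hM x hx)
  calc |P.eval x| ≤ |P.eval (j : ℝ)| + |P.eval x - P.eval (j : ℝ)| := by
        linarith [abs_sub_abs_le_abs_sub (P.eval x) (P.eval (j : ℝ))]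
    _ ≤ 1 + 4 * n ^ 2 * M / k * (1 / 2) := by
        gcongr
        · exact hgrid j hjk
        · exact hmvt.trans (by gcongr)
    _ = 1 + 2 * n ^ 2 * M / k := by ring

/-- Contrapositive form of the Markov corollary: a polynomial of degree
`d < sqrt(0.001·k / 2.002)` that is bounded by 1 at the integers `{0, 1, …, k}` (`k ≥ 1`)
satisfies `|p(x)| < 1.001` on all of `[0, k]`. -/
theorem markov_corollary_contrapositive
    (p : Polynomial ℝ) (d k : ℕ)
    (hd : p.natDegree = d) (hk : 1 ≤ k)
    (hbound : ∀ j : ℕ, j ≤ k → |p.eval (j : ℝ)| ≤ 1)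
    (hdeg : (d : ℝ) < Real.sqrt (0.001 * k / 2.002)) :
    ∀ x ∈ Set.Icc (0 : ℝ) k, |p.eval x| < 1.001 := by
  intro x hx
  have hk' : (0 : ℝ) < k := by exact_mod_cast hk
  have hd2 : 2002 * (d : ℝ) ^ 2 < k := by
    have := (Real.lt_sqrt d.cast_nonneg).mp hdeg
    norm_num at this
    linarith
  obtain ⟨z, hz, hmax⟩ := isCompact_Icc.exists_isMaxOn (nonempty_Icc.mpr hk'.le)
    (continuous_abs.comp p.continuous).continuousOn
  have hM : ∀ y ∈ Icc (0 : ℝ) k, |p.eval y| ≤ |p.eval z| := fun y hy => hmax hy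
  have hz_le := abs_eval_le_of_abs_eval_nat_le hk hd.le hM hbound hz
  rw [← sub_le_iff_le_add', le_div_iff₀ hk'] at hz_le
  by_contra! hx_big
  have hz_big := hx_big.trans (hM x hx)
  nlinarith [mul_le_mul_of_nonneg_right hz_big (by linarith : (0 : ℝ) ≤ k - 2 * d ^ 2)]
end

section
/- Let p be a real polynomial of degree d such that |p(j)| ≤ 1 for all integers j in {m, m+1, ..., n} where n - m ≥ k. If p exceeds 1.001 in absolute value somewhere on the real interval [m, n], then d ≥ c·sqrt(k) for an absolute constant c > 0. -/
/-!
Markov's inequality `|P'(1)| ≤ n ^ 2` for `|P| ≤ 1` on `[-1, 1]` follows from the extremality of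
the Chebyshev polynomial `T n`. Transported affinely, it bounds `|p'|` on `[m, n]` by
`4 d ^ 2 M / (n - m)`, where `M` is the maximum of `|p|` there. At a maximum point `y`, the mean
value theorem between `y` and the integer `⌊y⌋` gives `M ≤ 1 + 4 d ^ 2 M / (n - m)`; when
`d ^ 2 ≤ (n - m) / 10000` this forces `M ≤ 2500 / 2499 < 1.001`.
-/

open Set

namespace Polynomial

theorem abs_derivative_eval_one_le_s17 {P : ℝ[X]} {n : ℕ} {M : ℝ} (hP : P.natDegree ≤ n) (hM : 0 < M)
    (hPM : ∀ x ∈ Icc (-1 : ℝ) 1, |P.eval x| ≤ M) : |P.derivative.eval 1| ≤ n ^ 2 * M := by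
  have markov : ∀ Q : ℝ[X], Q.natDegree ≤ n → (∀ x ∈ Icc (-1 : ℝ) 1, |Q.eval x| ≤ 1) →
      Q.derivative.eval 1 ≤ n ^ 2 := fun Q hQ hQ1 => by
    simpa [Chebyshev.derivative_T_eval_one] using
      Chebyshev.eval_iterate_derivative_le_of_forall_abs_le_one (k := 1) le_rfl
        (degree_le_of_natDegree_le hQ) hQ1
  set Q := C M⁻¹ * P
  have hQ : Q.natDegree ≤ n := (natDegree_C_mul_le _ _).trans hP
  have hQ1 : ∀ x ∈ Icc (-1 : ℝ) 1, |Q.eval x| ≤ 1 := fun x hx => by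
    simpa [Q, abs_mul, abs_of_pos hM, inv_mul_le_iff₀ hM] using hPM x hx
  have hup := markov Q hQ hQ1
  have hlow := markov (-Q) (by rwa [natDegree_neg]) (by simpa using hQ1)
  simp only [derivative_neg, eval_neg] at hlow
  have hQ' : |Q.derivative.eval 1| ≤ n ^ 2 := abs_le.2 ⟨by linarith, hup⟩
  rw [mul_comm]
  simpa [Q, abs_mul, abs_of_pos hM, inv_mul_le_iff₀ hM] using hQ'

theorem abs_mul_abs_derivative_eval_le {P : ℝ[X]} {n : ℕ} {M : ℝ} (hP : P.natDegree ≤ n)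
    (hM : 0 < M) (x α : ℝ) (hPM : ∀ y ∈ uIcc x (x - 2 * α), |P.eval y| ≤ M) :
    |α| * |P.derivative.eval x| ≤ n ^ 2 * M := by
  set Q := P.comp (C α * X + C (x - α))
  have hQ : Q.natDegree ≤ n :=
    natDegree_comp_le.trans (by nlinarith [natDegree_linear_le (a := α) (b := x - α)])
  have hQM : ∀ t ∈ Icc (-1 : ℝ) 1, |Q.eval t| ≤ M := fun t ⟨ht₁, ht₂⟩ => by
    have hmem : α * t + (x - α) ∈ uIcc x (x - 2 * α) := by
      rw [mem_uIcc]
      rcases le_total 0 α with hα | hα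
      · right; constructor <;> nlinarith
      · left; constructor <;> nlinarith
    simpa [Q] using hPM _ hmem
  have hQ' : Q.derivative.eval 1 = α * P.derivative.eval x := by
    simp [Q, derivative_comp]
  simpa [hQ', abs_mul] using abs_derivative_eval_one_le_s17 hQ hM hQM

theorem abs_derivative_eval_le_of_mem_Icc {P : ℝ[X]} {n : ℕ} {M a b x : ℝ} (hP : P.natDegree ≤ n)
    (hM : 0 < M) (hab : a < b) (hPM : ∀ y ∈ Icc a b, |P.eval y| ≤ M) (hx : x ∈ Icc a b) :
    |P.derivative.eval x| ≤ 4 * n ^ 2 * M / (b - a) := by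
  -- `x` is an endpoint of `[a, x]` or `[x, b]`, one of which has length at least `(b - a) / 2`.
  obtain ⟨α, hα, hαx⟩ : ∃ α, (b - a) / 4 ≤ |α| ∧ uIcc x (x - 2 * α) ⊆ Icc a b := by
    rcases le_total ((a + b) / 2) x with hmid | hmid
    · refine ⟨(x - a) / 2, ?_, uIcc_subset_Icc hx ?_⟩
      · rw [abs_of_nonneg (by linarith [hx.1])]; linarith
      · constructor <;> linarith [hx.2]
    · refine ⟨(x - b) / 2, ?_, uIcc_subset_Icc hx ?_⟩
      · rw [abs_of_nonpos (by linarith [hx.2])]; linarith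
      · constructor <;> linarith [hx.1]
  have h := abs_mul_abs_derivative_eval_le hP hM x α fun y hy => hPM y (hαx hy)
  rw [le_div_iff₀ (by linarith)]
  nlinarith [abs_nonneg (P.derivative.eval x), sq_nonneg (n : ℝ)]

theorem abs_eval_le_one_add_of_abs_eval_intCast_le_one {p : ℝ[X]} {d : ℕ} {m n : ℤ} {M : ℝ}
    (hp : p.natDegree ≤ d) (hmn : (m : ℝ) < n) (hM : 0 < M)
    (hpM : ∀ y ∈ Icc (m : ℝ) n, |p.eval y| ≤ M)
    (hp1 : ∀ j : ℤ, m ≤ j → j ≤ n → |p.eval (j : ℝ)| ≤ 1) {x : ℝ} (hx : x ∈ Icc (m : ℝ) n) :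
    |p.eval x| ≤ 1 + 4 * d ^ 2 * M / (n - m) := by
  have hj : (⌊x⌋ : ℝ) ∈ Icc (m : ℝ) n :=
    ⟨by exact_mod_cast Int.le_floor.2 hx.1, (Int.floor_le x).trans hx.2⟩
  have hmvt : |p.eval x - p.eval (⌊x⌋ : ℝ)| ≤ 4 * d ^ 2 * M / (n - m) * |x - ⌊x⌋| := by
    simpa [Real.norm_eq_abs] using
      (convex_Icc (m : ℝ) n).norm_image_sub_le_of_norm_hasDerivWithin_le
        (fun t _ => (p.hasDerivAt t).hasDerivWithinAt)
        (fun t ht => abs_derivative_eval_le_of_mem_Icc hp hM hmn hpM ht) hj hx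
  have hfloor : |x - ⌊x⌋| ≤ 1 := by
    rw [Int.self_sub_floor, Int.abs_fract]
    exact (Int.fract_lt_one x).le
  have hj1 : |p.eval (⌊x⌋ : ℝ)| ≤ 1 := hp1 _ (by exact_mod_cast hj.1) (by exact_mod_cast hj.2)
  have hD : 0 ≤ 4 * d ^ 2 * M / (n - m) := by
    have := sub_pos.2 hmn
    positivity
  linarith [abs_sub_abs_le_abs_sub (p.eval x) (p.eval (⌊x⌋ : ℝ)), mul_le_of_le_one_right hD hfloor]

end Polynomial

/-- Shifted form of the Markov corollary: there is an absolute constant `c > 0` such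
that if `p` has degree `d`, `|p(j)| ≤ 1` for all integers `j ∈ {m, …, n}` where
`n - m ≥ k`, and `|p|` exceeds `1.001` somewhere on `[m, n]`, then `d ≥ c·sqrt(k)`. -/
theorem markov_corollary_shifted :
    ∃ c : ℝ, 0 < c ∧
      ∀ (p : Polynomial ℝ) (d : ℕ) (m n : ℤ) (k : ℕ),
        p.natDegree = d → (k : ℤ) ≤ n - m →
        (∀ j : ℤ, m ≤ j → j ≤ n → |p.eval (j : ℝ)| ≤ 1) →
        (∃ x ∈ Set.Icc (m : ℝ) (n : ℝ), |p.eval x| > 1.001) →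
        (d : ℝ) ≥ c * Real.sqrt k := by
  refine ⟨1 / 100, by norm_num, ?_⟩
  rintro p d m n k rfl hk hp1 ⟨x₀, hx₀, hpx₀⟩
  by_contra! hd
  have hdk : (p.natDegree : ℝ) ^ 2 * 10000 < k := by
    have := Real.sq_sqrt (Nat.cast_nonneg (α := ℝ) k)
    nlinarith [(Nat.cast_nonneg _ : (0 : ℝ) ≤ p.natDegree)]
  have hkmn : (k : ℝ) ≤ n - m := by exact_mod_cast hk
  have hmn : (m : ℝ) < n := by linarith [sq_nonneg (p.natDegree : ℝ)]
  obtain ⟨y, hy, hmax⟩ := isCompact_Icc.exists_isMaxOn (nonempty_Icc.2 hmn.le)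
    p.continuous.abs.continuousOn
  have hM : 1.001 < |p.eval y| := hpx₀.trans_le (hmax hx₀)
  have hyM := Polynomial.abs_eval_le_one_add_of_abs_eval_intCast_le_one le_rfl hmn (by linarith)
    hmax hp1 hy
  have hsmall : 4 * p.natDegree ^ 2 * |p.eval y| / (n - m) ≤ |p.eval y| / 2500 := by
    rw [div_le_div_iff₀ (by linarith) (by norm_num)]
    nlinarith
  linarith
end
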